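/- arXiv:1707.06748 — 2 statements merged into one kernel-verified Lean document; each statement's English description precedes it below -/
import Mathlib

section
/- Let n ≥ 1 and let H, K : Matrix (Fin n × Fin 2) (Fin n × Fin 2) ℂ with Hᴴ = H. Assume: (1) K is the diagonal matrix with paired eigenvalues determined by an injective k : Fin n → ℝ; (2) H satisfies Condition L-2; (3) there exist two 2-words w₁ and w₂ (over H and K) based at 0 such that (w₁ * w₁ᴴ) * (w₂ * w₂ᴴ) ≠ (w₂ * w₂ᴴ) * (w₁ * w₁ᴴ). Then Algebra.adjoin ℂ {H, K} = ⊤, i.e. H and K generate the full matrix algebra M_{2n}(ℂ). -/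
open Matrix

/-- The `(i, j)` q-block of a `qn × qn` matrix indexed by `Fin n × Fin q`. -/
def blk {n q : ℕ} (M : Matrix (Fin n × Fin q) (Fin n × Fin q) ℂ) (i j : Fin n) :
    Matrix (Fin q) (Fin q) ℂ :=
  Matrix.of fun a b => M (i, a) (j, b)

/-- `IsWord H K i j w` means that `w` is a nonempty product
`blk M₁ i j₁ * blk M₂ j₁ j₂ * ⋯ * blk Mₛ jₛ₋₁ j` of q-blocks of `H` and `K`,
i.e. a q-word based at `i` and ending at `j`. -/
inductive IsWord {n q : ℕ} (H K : Matrix (Fin n × Fin q) (Fin n × Fin q) ℂ) :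
    Fin n → Fin n → Matrix (Fin q) (Fin q) ℂ → Prop
  | base (M : Matrix (Fin n × Fin q) (Fin n × Fin q) ℂ) (hM : M = H ∨ M = K)
      (i j : Fin n) : IsWord H K i j (blk M i j)
  | step (M : Matrix (Fin n × Fin q) (Fin n × Fin q) ℂ) (hM : M = H ∨ M = K)
      (i j l : Fin n) (w : Matrix (Fin q) (Fin q) ℂ) :
      IsWord H K j l w → IsWord H K i l (blk M i j * w)

/-- The element of `Fin n × Fin q` corresponding to the flat index `t`, under the
identification `(i, a) ↦ q * i + a` of `Fin n × Fin q` with `Fin (q * n)`. -/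
def unflat {n q : ℕ} (hn : 0 < n) (hq : 0 < q) (t : ℕ) : Fin n × Fin q :=
  (⟨(t / q) % n, Nat.mod_lt _ hn⟩, ⟨t % q, Nat.mod_lt _ hq⟩)

/-- **Condition L-q**: there is a partition `l 0 = 1, l 1 = 1, l 2, …, l (m-1)` of `n`,
nondecreasing, with each later part a sum of an initial segment of earlier parts, such
that each of the corresponding square top-row blocks of `H` (of sizes `q * l j`) is
invertible. -/
def CondL {n q : ℕ} (hn : 0 < n) (hq : 0 < q)
    (H : Matrix (Fin n × Fin q) (Fin n × Fin q) ℂ) : Prop :=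
  ∃ (m : ℕ) (_ : 2 ≤ m) (l : Fin m → ℕ),
    (∀ j : Fin m, (j : ℕ) ≤ 1 → l j = 1) ∧
    Monotone l ∧
    (∑ i, l i) = n ∧
    (∀ j : Fin m, 2 ≤ (j : ℕ) → ∃ k : Fin m, k < j ∧ l j = ∑ i ∈ Finset.Iic k, l i) ∧
    (∀ j : Fin m, IsUnit (Matrix.of fun r c : Fin (q * l j) =>
      H (unflat hn hq (r : ℕ)) (unflat hn hq (q * (∑ i ∈ Finset.Iio j, l i) + (c : ℕ)))))

/-!
Since `H` and `K` are Hermitian, the algebra they generate is a `⋆`-subalgebra of `M_{2n}(ℂ)`;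
such an algebra acts semisimply (orthogonal complements of invariant subspaces are invariant),
so by Jacobson density it is its own bicommutant, and it is everything once its commutant is
scalar. Let `D` commute with `H` and `K`. As the eigenvalue pairs of `K` are distinct, `D` is
block diagonal, and then its block `D₀₀` intertwines every word: `D₀₀ w = w D_jj` for a word
`w` from `0` to `j`. Applying this to `Dᴴ` as well, `D₀₀` commutes with `w₁ w₁ᴴ` and `w₂ w₂ᴴ`;
these two `2 × 2` matrices do not commute, so `D₀₀ = c`. Finally `E = D - c` is killed block by
block along Condition L-2: if the blocks of `E` in the first `l j` block rows vanish, the top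
`2 l j` rows of `H E = E H` vanish, which says that the invertible top-row block `j` of `H`
times the diagonal block `j` of `E` is zero. Since every later part `l j` is at most the sum of
the parts before it, those first `l j` block rows have always been treated already.
-/

section DoubleCentralizer

variable {𝕜 E : Type*} [RCLike 𝕜] [NormedAddCommGroup E] [InnerProductSpace 𝕜 E]
  [FiniteDimensional 𝕜 E]

namespace StarSubalgebra

theorem isSemisimpleModule (A : StarSubalgebra 𝕜 (E →ₗ[𝕜] E)) :
    IsSemisimpleModule A.toSubalgebra E := by
  refine { exists_isCompl := fun p => ⟨{ (p.restrictScalars 𝕜)ᗮ with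
    smul_mem' := fun a v hv w hw => ?_ }, ?_⟩ }
  · have hstar : star (a : E →ₗ[𝕜] E) ∈ A := star_mem a.2
    change inner 𝕜 w ((a : E →ₗ[𝕜] E) v) = 0
    rw [← LinearMap.adjoint_inner_left, ← LinearMap.star_eq_adjoint]
    exact hv _ (p.smul_mem ⟨_, hstar⟩ hw)
  · rw [← Submodule.isCompl_restrictScalars_iff 𝕜]
    exact Submodule.isCompl_orthogonal _

theorem centralizer_centralizer (A : StarSubalgebra 𝕜 (E →ₗ[𝕜] E)) :
    Set.centralizer (Set.centralizer (A : Set (E →ₗ[𝕜] E))) = A := by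
  refine subset_antisymm (fun f hf => ?_) Set.subset_centralizer_centralizer
  have := A.isSemisimpleModule
  have : Module.Finite (Module.End A.toSubalgebra E) E :=
    .of_restrictScalars_finite 𝕜 _ _
  let F : Module.End (Module.End A.toSubalgebra E) E :=
    { toFun := f
      map_add' := f.map_add
      map_smul' := fun g v => by
        have hg : g.restrictScalars 𝕜 ∈ Set.centralizer (A : Set (E →ₗ[𝕜] E)) :=
          fun a ha => LinearMap.ext fun w => (g.map_smul ⟨a, ha⟩ w).symm
        exact (LinearMap.congr_fun (hf _ hg) v).symm }
  obtain ⟨a, ha⟩ := Module.Finite.toModuleEnd_moduleEnd_surjective F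
  have : (a : E →ₗ[𝕜] E) = f := LinearMap.ext fun v => LinearMap.congr_fun ha v
  exact this ▸ a.2

theorem eq_top_of_centralizer_subset (A : StarSubalgebra 𝕜 (E →ₗ[𝕜] E))
    (h : Set.centralizer (A : Set (E →ₗ[𝕜] E)) ⊆ Set.range (algebraMap 𝕜 _)) : A = ⊤ := by
  refine StarSubalgebra.eq_top_iff.mpr fun f => ?_
  rw [← SetLike.mem_coe, ← A.centralizer_centralizer]
  exact Set.centralizer_subset h fun _ ⟨c, hc⟩ => hc ▸ Algebra.commutes c f

end StarSubalgebra

end DoubleCentralizer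

namespace Matrix

theorem starSubalgebra_eq_top_of_centralizer_subset {𝕜 ι : Type*} [RCLike 𝕜] [Fintype ι]
    [DecidableEq ι] (A : StarSubalgebra 𝕜 (Matrix ι ι 𝕜))
    (h : Set.centralizer (A : Set (Matrix ι ι 𝕜)) ⊆ Set.range (algebraMap 𝕜 _)) : A = ⊤ := by
  let e := LinearMap.toMatrixOrthonormal (EuclideanSpace.basisFun ι 𝕜)
  have hB : A.comap e.toStarAlgHom = ⊤ := by
    refine StarSubalgebra.eq_top_of_centralizer_subset _ fun f hf => ?_
    obtain ⟨c, hc⟩ := h fun a ha => by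
      have := hf (e.symm a) (by simpa [StarSubalgebra.mem_comap] using ha)
      simpa using congrArg e this
    exact ⟨c, e.injective ((AlgHomClass.commutes e c).trans hc)⟩
  refine StarSubalgebra.eq_top_iff.mpr fun x => ?_
  have : e.symm x ∈ A.comap e.toStarAlgHom := hB ▸ StarSubalgebra.mem_top
  simpa [StarSubalgebra.mem_comap] using this

section FinTwo

variable {R : Type*} [CommRing R]

/-- Coordinates of the traceless part of `X`, in which the commutator of `2 × 2` matrices becomes
the cross product. -/
def commutatorVec (X : Matrix (Fin 2) (Fin 2) R) : Fin 3 → R := ![X 0 0 - X 1 1, X 0 1, X 1 0]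

theorem mul_sub_mul_eq_commutatorVec_cross (X Y : Matrix (Fin 2) (Fin 2) R) :
    X * Y - Y * X =
      let w := commutatorVec X ⨯₃ commutatorVec Y
      !![w 0, w 2; w 1, -w 0] := by
  ext i j
  fin_cases i <;> fin_cases j <;> simp [commutatorVec, cross_apply, Matrix.mul_apply] <;> ring

theorem commute_iff_commutatorVec_cross_eq_zero {X Y : Matrix (Fin 2) (Fin 2) R} :
    Commute X Y ↔ commutatorVec X ⨯₃ commutatorVec Y = 0 := by
  rw [Commute, SemiconjBy, ← sub_eq_zero, mul_sub_mul_eq_commutatorVec_cross]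
  simp [← Matrix.ext_iff, funext_iff, Fin.forall_fin_succ]
  tauto

theorem eq_smul_one_of_commutatorVec_eq_zero {X : Matrix (Fin 2) (Fin 2) R}
    (h : commutatorVec X = 0) : X = X 1 1 • 1 := by
  have h0 := congrFun h 0
  have h1 := congrFun h 1
  have h2 := congrFun h 2
  simp only [commutatorVec, Fin.isValue, Matrix.cons_val, Pi.zero_apply] at h0 h1 h2
  ext i j
  fin_cases i <;> fin_cases j <;> simp [h1, h2, sub_eq_zero.mp h0]

theorem exists_eq_smul_one_of_commute {F : Type*} [Field F] {A B D : Matrix (Fin 2) (Fin 2) F}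
    (hAB : ¬Commute A B) (hDA : Commute D A) (hDB : Commute D B) : ∃ c : F, D = c • 1 := by
  by_contra! hD
  have hu : commutatorVec D ≠ 0 := fun h => hD _ (eq_smul_one_of_commutatorVec_eq_zero h)
  have parallel {X} (hX : Commute D X) : ∃ a : F, commutatorVec X = a • commutatorVec D := by
    rw [commute_iff_commutatorVec_cross_eq_zero, ← not_ne_iff,
      crossProduct_ne_zero_iff_linearIndependent, LinearIndependent.pair_iff' hu] at hX
    obtain ⟨a, ha⟩ := not_forall_not.mp hX
    exact ⟨a, ha.symm⟩
  obtain ⟨a, ha⟩ := parallel hDA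
  obtain ⟨b, hb⟩ := parallel hDB
  apply hAB
  rw [commute_iff_commutatorVec_cross_eq_zero, ha, hb]
  simp [cross_self]

end FinTwo

theorem submatrix_eq_zero_of_isUnit {ι κ R : Type*} [Fintype ι] [Fintype κ] [DecidableEq κ]
    [CommRing R] {M E : Matrix ι ι R} {r c : κ → ι} (hc : Function.Injective c)
    (hM : IsUnit (M.submatrix r c)) (hME : ∀ x y, (M * E) (r x) (c y) = 0)
    (hE : ∀ z ∉ Set.range c, ∀ y, E z (c y) = 0) : E.submatrix c c = 0 := by
  refine hM.mul_right_eq_zero.mp (Matrix.ext fun x y => ?_)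
  rw [zero_apply, ← hME x y, mul_apply, mul_apply]
  exact Fintype.sum_of_injective c hc _ _ (fun z hz => by rw [hE z hz y, mul_zero]) fun _ => rfl

def IsBlockDiag {ι κ α : Type*} [Zero α] (D : Matrix (ι × κ) (ι × κ) α) : Prop :=
  ∀ p p' : ι × κ, p.1 ≠ p'.1 → D p p' = 0

theorem isBlockDiag_of_commute_diagonal {ι κ R : Type*} [Fintype ι] [Fintype κ]
    [DecidableEq ι] [DecidableEq κ] [CommRing R] [NoZeroDivisors R]
    {D : Matrix (ι × κ) (ι × κ) R} {d : ι → R} (hd : Function.Injective d)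
    (h : Commute D (diagonal fun p => d p.1)) : IsBlockDiag D := by
  intro p p' hpp'
  have hpp := congrFun (congrFun h.eq p) p'
  rw [mul_diagonal, diagonal_mul] at hpp
  have : D p p' * (d p'.1 - d p.1) = 0 := by linear_combination hpp
  exact (mul_eq_zero.mp this).resolve_right (sub_ne_zero.mpr (hd.ne (Ne.symm hpp')))

end Matrix

namespace Fin

theorem sum_castLE_eq_sum_Iio {M : Type*} [AddCommMonoid M] {m : ℕ} (l : Fin m → M)
    (j : Fin m) :
    ∑ t : Fin j, l (castLE j.2.le t) = ∑ x ∈ Finset.Iio j, l x := by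
  refine Finset.sum_nbij (castLE j.2.le) (fun t _ => Finset.mem_Iio.mpr t.2)
    (castLE_injective _).injOn (fun x hx => ?_) fun _ _ => rfl
  have hxj : x < j := by simpa using hx
  exact ⟨⟨x, hxj⟩, by simp, rfl⟩

theorem exists_sum_Iio_le_lt {m : ℕ} (l : Fin m → ℕ) {i : ℕ} (hi : i < ∑ j, l j) :
    ∃ j, ∑ x ∈ Finset.Iio j, l x ≤ i ∧ i < ∑ x ∈ Finset.Iio j, l x + l j := by
  obtain ⟨⟨j, t⟩, hjt⟩ := finSigmaFinEquiv.surjective (⟨i, hi⟩ : Fin (∑ j, l j))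
  have := congrArg Fin.val hjt
  simp only [finSigmaFinEquiv_apply, sum_castLE_eq_sum_Iio] at this
  exact ⟨j, by omega, by omega⟩

theorem sum_Iio_add_le_sum {m : ℕ} (l : Fin m → ℕ) (j : Fin m) :
    ∑ x ∈ Finset.Iio j, l x + l j ≤ ∑ x, l x := by
  rw [add_comm, ← Finset.sum_insert Finset.notMem_Iio_self, Finset.Iio_insert]
  exact Finset.sum_le_sum_of_subset (Finset.subset_univ _)

theorem le_sum_Iio_of_eq_sum_Iic {m : ℕ} {l : Fin m → ℕ}
    (h01 : ∀ j : Fin m, (j : ℕ) ≤ 1 → l j = 1)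
    (hpart : ∀ j : Fin m, 2 ≤ (j : ℕ) → ∃ k : Fin m, k < j ∧ l j = ∑ i ∈ Finset.Iic k, l i)
    {j : Fin m} (hj : (j : ℕ) ≠ 0) : l j ≤ ∑ i ∈ Finset.Iio j, l i := by
  rcases le_or_gt (j : ℕ) 1 with hj1 | hj2
  · have h0 : (⟨0, by omega⟩ : Fin m) ∈ Finset.Iio j :=
      Finset.mem_Iio.mpr (by simp [Fin.lt_def]; omega)
    calc l j = l ⟨0, by omega⟩ := by rw [h01 j hj1, h01 _ zero_le_one]
      _ ≤ _ := Finset.single_le_sum (fun _ _ => Nat.zero_le _) h0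
  · obtain ⟨k, hkj, hlk⟩ := hpart j hj2
    rw [hlk]
    exact Finset.sum_le_sum_of_subset fun x hx =>
      Finset.mem_Iio.mpr ((Finset.mem_Iic.mp hx).trans_lt hkj)

end Fin

open Matrix

section Unflat

variable {n q : ℕ} (hn : 0 < n) (hq : 0 < q)

theorem unflat_of_lt {t : ℕ} (ht : t < q * n) :
    unflat hn hq t = (⟨t / q, Nat.div_lt_of_lt_mul ht⟩, ⟨t % q, Nat.mod_lt _ hq⟩) := by
  simp [unflat, Nat.mod_eq_of_lt (Nat.div_lt_of_lt_mul ht)]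

theorem unflat_mul_add (i : Fin n) (a : Fin q) : unflat hn hq (q * i + a) = (i, a) := by
  have : q * i + a < q * n := by nlinarith [i.2, a.2]
  rw [unflat_of_lt hn hq this]
  ext <;> simp [Nat.mul_add_div hq, Nat.div_eq_of_lt a.2, Nat.mod_eq_of_lt a.2]

theorem unflat_injOn : Set.InjOn (unflat hn hq) (Set.Iio (q * n)) := by
  intro t ht t' ht' h
  rw [unflat_of_lt hn hq ht, unflat_of_lt hn hq ht'] at h
  simp only [Prod.mk.injEq, Fin.mk.injEq] at h
  rw [← Nat.div_add_mod t q, h.1, h.2, Nat.div_add_mod]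

theorem unflat_mul_add_fst {s y : ℕ} (h : q * s + y < q * n) :
    ((unflat hn hq (q * s + y)).1 : ℕ) = s + y / q := by
  simp [unflat_of_lt hn hq h, Nat.mul_add_div hq]

theorem exists_unflat_mul_add_eq {s l : ℕ} (i : Fin n) (a : Fin q) (hsi : s ≤ i)
    (his : i < s + l) : ∃ y : Fin (q * l), unflat hn hq (q * s + y) = (i, a) := by
  have hy : q * (i - s) + a < q * l := by
    have := Nat.mul_le_mul_left q (show (i : ℕ) - s + 1 ≤ l by omega)
    rw [Nat.mul_add, mul_one] at this
    omega
  refine ⟨⟨_, hy⟩, ?_⟩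
  have : q * s + q * (i - s) = q * i := by rw [← Nat.mul_add, Nat.add_sub_cancel' hsi]
  rw [← unflat_mul_add hn hq i a, ← this, add_assoc]

end Unflat

theorem blk_conjTranspose {n q : ℕ} (M : Matrix (Fin n × Fin q) (Fin n × Fin q) ℂ)
    (i j : Fin n) : blk Mᴴ i j = (blk M j i)ᴴ :=
  rfl

namespace Matrix.IsBlockDiag

variable {n q : ℕ} {D E H K : Matrix (Fin n × Fin q) (Fin n × Fin q) ℂ}

theorem conjTranspose (hD : IsBlockDiag D) : IsBlockDiag Dᴴ := fun p p' h => by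
  rw [conjTranspose_apply, hD p' p (Ne.symm h), star_zero]

theorem apply_eq_zero_of_blk_eq_zero (hE : IsBlockDiag E) {i : Fin n} (h : blk E i i = 0)
    (a : Fin q) (z : Fin n × Fin q) : E (i, a) z = 0 := by
  by_cases hz : i = z.1
  · simpa [blk, hz] using congrFun (congrFun h a) z.2
  · exact hE _ _ hz

theorem blk_mul_left (hD : IsBlockDiag D) (M : Matrix (Fin n × Fin q) (Fin n × Fin q) ℂ)
    (i j : Fin n) : blk (D * M) i j = blk D i i * blk M i j := by
  ext a b
  simp only [blk, of_apply, mul_apply, Fintype.sum_prod_type]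
  exact Finset.sum_eq_single i (fun k _ hk => Finset.sum_eq_zero fun c _ => by
    rw [hD _ _ (Ne.symm hk), zero_mul]) (by simp)

theorem blk_mul_right (hD : IsBlockDiag D) (M : Matrix (Fin n × Fin q) (Fin n × Fin q) ℂ)
    (i j : Fin n) : blk (M * D) i j = blk M i j * blk D j j := by
  ext a b
  simp only [blk, of_apply, mul_apply, Fintype.sum_prod_type]
  exact Finset.sum_eq_single j (fun k _ hk => Finset.sum_eq_zero fun c _ => by
    rw [hD _ _ hk, mul_zero]) (by simp)

theorem blk_mul_word (hD : IsBlockDiag D) (hDH : Commute D H) (hDK : Commute D K) {i j : Fin n}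
    {w : Matrix (Fin q) (Fin q) ℂ} (hw : IsWord H K i j w) : blk D i i * w = w * blk D j j := by
  have hblk {M} (hM : M = H ∨ M = K) (i j : Fin n) :
      blk D i i * blk M i j = blk M i j * blk D j j := by
    have hDM : Commute D M := by rcases hM with rfl | rfl <;> assumption
    rw [← hD.blk_mul_left, ← hD.blk_mul_right, hDM.eq]
  induction hw with
  | base M hM i j => exact hblk hM i j
  | step M hM i j l w _ ih => rw [← mul_assoc, hblk hM, mul_assoc, ih, mul_assoc]

theorem commute_blk_mul_conjTranspose (hD : IsBlockDiag D) (hH : IsSelfAdjoint H)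
    (hK : IsSelfAdjoint K) (hDH : Commute D H) (hDK : Commute D K) {i j : Fin n}
    {w : Matrix (Fin q) (Fin q) ℂ} (hw : IsWord H K i j w) : Commute (blk D i i) (w * wᴴ) := by
  have h := hD.blk_mul_word hDH hDK hw
  have hstar := congrArg Matrix.conjTranspose <| hD.conjTranspose.blk_mul_word
    (hH.star_eq ▸ hDH.star_star) (hK.star_eq ▸ hDK.star_star) hw
  simp only [conjTranspose_mul, blk_conjTranspose, conjTranspose_conjTranspose] at hstar
  calc blk D i i * (w * wᴴ) = w * (blk D j j * wᴴ) := by rw [← mul_assoc, h, mul_assoc]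
    _ = w * wᴴ * blk D i i := by rw [← hstar, mul_assoc]

end Matrix.IsBlockDiag

section CondL

variable {n q : ℕ} {E H : Matrix (Fin n × Fin q) (Fin n × Fin q) ℂ} (hn : 0 < n) (hq : 0 < q)

theorem blk_eq_zero_of_isUnit_topRowBlock {s l : ℕ} (hsl : s + l ≤ n)
    (hU : IsUnit (Matrix.of fun r c : Fin (q * l) =>
      H (unflat hn hq (r : ℕ)) (unflat hn hq (q * s + (c : ℕ)))))
    (hE : IsBlockDiag E) (hHE : Commute H E) (hrows : ∀ i : Fin n, (i : ℕ) < l → blk E i i = 0)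
    (i : Fin n) (hsi : s ≤ i) (his : i < s + l) : blk E i i = 0 := by
  set c : Fin (q * l) → Fin n × Fin q := fun y => unflat hn hq (q * s + y)
  have hlt (y : Fin (q * l)) : q * s + y < q * n := by nlinarith [y.2]
  have hc : Function.Injective c := fun x y hxy =>
    Fin.ext (Nat.add_left_cancel (unflat_injOn hn hq (hlt x) (hlt y) hxy))
  have hzero : E.submatrix c c = 0 := by
    refine submatrix_eq_zero_of_isUnit (r := fun x : Fin (q * l) => unflat hn hq x) hc hU
      (fun x y => ?_) (fun z hz y => ?_)
    · have hx : (x : ℕ) < q * n := x.2.trans_le (Nat.mul_le_mul_left q (by omega))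
      rw [hHE.eq, mul_apply]
      refine Finset.sum_eq_zero fun z _ => ?_
      rw [unflat_of_lt hn hq hx,
        hE.apply_eq_zero_of_blk_eq_zero (hrows _ (Nat.div_lt_of_lt_mul x.2)), zero_mul]
    · by_cases h : z.1 = (c y).1
      · have hzy : (z.1 : ℕ) = s + y / q :=
          (congrArg Fin.val h).trans (unflat_mul_add_fst hn hq (hlt y))
        obtain ⟨y', hy'⟩ := exists_unflat_mul_add_eq hn hq z.1 z.2 (hzy ▸ Nat.le_add_right _ _)
          (hzy ▸ Nat.add_lt_add_left (Nat.div_lt_of_lt_mul y.2) s)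
        exact absurd ⟨y', hy'⟩ hz
      · exact hE _ _ h
  ext a b
  obtain ⟨x, hx⟩ := exists_unflat_mul_add_eq hn hq i a hsi his
  obtain ⟨y, hy⟩ := exists_unflat_mul_add_eq hn hq i b hsi his
  simpa [c, hx, hy, blk] using congrFun (congrFun hzero x) y

theorem eq_zero_of_condL (hL : CondL hn hq H) (hE : IsBlockDiag E) (hHE : Commute H E)
    (h0 : blk E ⟨0, hn⟩ ⟨0, hn⟩ = 0) : E = 0 := by
  obtain ⟨m, -, l, h01, -, hsum, hpart, hinv⟩ := hL
  have hblk (i : Fin n) : blk E i i = 0 := by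
    induction i using WellFoundedLT.induction with | _ i IH
    obtain ⟨j, hsj, hjs⟩ := Fin.exists_sum_Iio_le_lt l (i.2.trans_eq hsum.symm)
    by_cases hj : (j : ℕ) = 0
    · have hs : ∑ x ∈ Finset.Iio j, l x = 0 :=
        Finset.sum_eq_zero fun x hx => absurd (Finset.mem_Iio.mp hx) (by simp [Fin.lt_def, hj])
      rw [hs, h01 j (by omega)] at hjs
      rwa [show i = ⟨0, hn⟩ from Fin.ext (by simp; omega)]
    · have hlj := Fin.le_sum_Iio_of_eq_sum_Iic h01 hpart hj
      exact blk_eq_zero_of_isUnit_topRowBlock hn hq ((Fin.sum_Iio_add_le_sum l j).trans hsum.le) (hinv j)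
        hE hHE (fun i' hi' => IH i' (Fin.lt_def.mpr (by omega))) i hsj hjs
  ext ⟨i, a⟩ ⟨i', b⟩
  by_cases h : i = i'
  · subst h
    exact congrFun (congrFun (hblk i) a) b
  · exact hE _ _ h

end CondL

theorem eq_smul_one_of_commute_of_condL {n : ℕ} (hn : 0 < n)
    {H K D : Matrix (Fin n × Fin 2) (Fin n × Fin 2) ℂ} (hH : IsSelfAdjoint H)
    (hK : IsSelfAdjoint K) {κ : Fin n → ℂ} (hκ : Function.Injective κ)
    (hKdiag : K = diagonal fun p => κ p.1) (hL : CondL hn two_pos H)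
    {j₁ j₂ : Fin n} {w₁ w₂ : Matrix (Fin 2) (Fin 2) ℂ} (hw₁ : IsWord H K ⟨0, hn⟩ j₁ w₁)
    (hw₂ : IsWord H K ⟨0, hn⟩ j₂ w₂) (hne : ¬Commute (w₁ * w₁ᴴ) (w₂ * w₂ᴴ))
    (hDH : Commute D H) (hDK : Commute D K) : ∃ c : ℂ, D = c • 1 := by
  have hD : IsBlockDiag D := isBlockDiag_of_commute_diagonal hκ (hKdiag ▸ hDK)
  obtain ⟨c, hc⟩ := exists_eq_smul_one_of_commute hne
    (hD.commute_blk_mul_conjTranspose hH hK hDH hDK hw₁)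
    (hD.commute_blk_mul_conjTranspose hH hK hDH hDK hw₂)
  refine ⟨c, sub_eq_zero.mp (eq_zero_of_condL hn two_pos hL (fun p p' h => ?_)
    (hDH.symm.sub_right ((Commute.one_right H).smul_right c)) ?_)⟩
  · simp [hD p p' h, one_apply, Prod.ext_iff, h]
  · ext a b
    simpa [blk, one_apply, sub_eq_zero] using congrFun (congrFun hc a) b

/-- **Even-order constructibility.** If `K` is diagonal with `n` distinct real
eigenvalues each of multiplicity 2, `H` satisfies Condition L-2, and there are two
2-words `w₁`, `w₂` based at `0` such that `w₁ w₁ᴴ` and `w₂ w₂ᴴ` do not commute, then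
`H` and `K` generate the full matrix algebra `M_{2n}(ℂ)`. -/
theorem even_order_constructibility
    (n : ℕ) (hn : 0 < n)
    (H K : Matrix (Fin n × Fin 2) (Fin n × Fin 2) ℂ)
    (hH : Hᴴ = H)
    (k : Fin n → ℝ) (hk : Function.Injective k)
    (hK : ∀ p q : Fin n × Fin 2, K p q = if p = q then (k p.1 : ℂ) else 0)
    (hL : CondL hn (by norm_num) H)
    (hw : ∃ (w₁ w₂ : Matrix (Fin 2) (Fin 2) ℂ) (j₁ j₂ : Fin n),
      IsWord H K ⟨0, hn⟩ j₁ w₁ ∧ IsWord H K ⟨0, hn⟩ j₂ w₂ ∧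
      (w₁ * w₁ᴴ) * (w₂ * w₂ᴴ) ≠ (w₂ * w₂ᴴ) * (w₁ * w₁ᴴ)) :
    Algebra.adjoin ℂ {H, K} = ⊤ := by
  obtain ⟨w₁, w₂, j₁, j₂, hw₁, hw₂, hne⟩ := hw
  have hKdiag : K = diagonal fun p => (k p.1 : ℂ) := by
    ext p p'
    rw [hK, diagonal_apply]
  have hHsa : IsSelfAdjoint H := hH
  have hKsa : IsSelfAdjoint K := by
    rw [hKdiag]
    exact isHermitian_diagonal_of_self_adjoint _ (funext fun p => Complex.conj_ofReal _)
  have hadjoin : (StarAlgebra.adjoin ℂ {H, K}).toSubalgebra = Algebra.adjoin ℂ {H, K} := by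
    rw [StarAlgebra.adjoin_toSubalgebra, ← Set.image_star, Set.image_insert_eq,
      Set.image_singleton, hHsa.star_eq, hKsa.star_eq, Set.union_self]
  suffices StarAlgebra.adjoin ℂ {H, K} = ⊤ by
    rw [← hadjoin, this, StarSubalgebra.top_toSubalgebra]
  refine starSubalgebra_eq_top_of_centralizer_subset _ fun D hD => ?_
  have hcomm {M} (hM : M ∈ ({H, K} : Set _)) : Commute D M :=
    (hD M (StarAlgebra.subset_adjoin ℂ _ hM)).symm
  obtain ⟨c, rfl⟩ := eq_smul_one_of_commute_of_condL hn hHsa hKsa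
    (Complex.ofReal_injective.comp hk) hKdiag hL hw₁ hw₂ hne (hcomm (by simp)) (hcomm (by simp))
  exact ⟨c, Algebra.algebraMap_eq_smul_one c⟩
end

section
/- Let q, n ≥ 1 and let H, K : Matrix (Fin n × Fin q) (Fin n × Fin q) ℂ with Hᴴ = H. Assume: (1) there exist r ≥ 1 and q-words v₁, …, v_r (over H and K), each based at 0 and ending at 0, such that the relation on Fin q given by a → b ↔ a ≠ b ∧ ∃ t, v_t a b ≠ 0 is strongly connected (∀ a b, Relation.ReflTransGen (· → ·) a b); (2) K is the diagonal matrix with q-fold eigenvalues determined by an injective k : Fin n → ℝ; (3) H satisfies Condition L-q; (4) there exists a q-word w (over H and K) based at 0 such that w * wᴴ is a diagonal q×q matrix whose q diagonal entries are pairwise distinct. Then Algebra.adjoin ℂ {H, K} = ⊤, i.e. H and K generate the full matrix algebra M_{qn}(ℂ). -/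
open Matrix

/-!
A diagonal matrix that is constant on the blocks is a polynomial in `K`, whose block eigenvalues
are distinct; so `A = adjoin {H, K}` contains the block projections, and it is closed under `ᴴ`
because `H` and `K` are hermitian. Hence a q-word `w` from block `i` to block `j` gives
`single i j 1 ⊗ₖ w ∈ A`. Interpolation on `w wᴴ` yields the diagonal matrix units of the corner
block `(0, 0)`, and the words `vₜ` connect them, so the whole corner lies in `A`.
Condition L-q then fills the first row of matrix units: if `A` contains the units `e_{x₀ y}` for
`y` in the first `s` block rows and `d ≤ s`, then multiplying `H` on the left by combinations of
these units with coefficients from the inverse of the top-row block over the block columns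
`s, …, s + d - 1`, and on the right by the projection onto those columns, gives the units in those
columns. By `ᴴ`-closure a full row of matrix units gives all of them.
-/

open scoped Kronecker

theorem Algebra.star_mem_adjoin {R S : Type*} [CommSemiring R] [StarRing R] [Semiring S]
    [StarRing S] [Algebra R S] [StarModule R S] {s : Set S} (hs : ∀ x ∈ s, star x ∈ s) {x : S}
    (hx : x ∈ Algebra.adjoin R s) : star x ∈ Algebra.adjoin R s := by
  rw [← Subalgebra.mem_star_iff, Subalgebra.star_adjoin_comm]
  exact Algebra.adjoin_mono hs hx

namespace Matrix

variable {ι R : Type*} [Fintype ι] [DecidableEq ι] [Field R] {A : Subalgebra R (Matrix ι ι R)}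

theorem aeval_diagonal (v : ι → R) (p : Polynomial R) :
    Polynomial.aeval (diagonal v) p = diagonal fun x => p.eval (v x) := by
  change Polynomial.aeval (diagonalAlgHom R v) p = _
  rw [Polynomial.aeval_algHom_apply, Polynomial.aeval_pi_apply]
  simp [diagonalAlgHom, Polynomial.coe_aeval_eq_eval]
  rfl

theorem diagonal_comp_mem {v : ι → R} (hv : diagonal v ∈ A) (g : R → R) :
    diagonal (g ∘ v) ∈ A := by
  classical
  have hp : Polynomial.aeval (diagonal v) (Lagrange.interpolate (Finset.univ.image v) id g) =
      diagonal (g ∘ v) := by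
    rw [aeval_diagonal]
    congr 1; funext x
    exact Lagrange.eval_interpolate_at_node g (Set.injOn_id _)
      (Finset.mem_image_of_mem v (Finset.mem_univ x))
  rw [← hp]
  exact Algebra.adjoin_le (Set.singleton_subset_iff.2 hv)
    (Polynomial.aeval_mem_adjoin_singleton R _)

theorem diagonal_comp_mem_of_injective {κ : Type*} {p : ι → κ} {k : κ → R} (hk : k.Injective)
    (hA : diagonal (k ∘ p) ∈ A) (φ : κ → R) : diagonal (φ ∘ p) ∈ A := by
  simpa [Function.comp_def, hk.extend_apply] using diagonal_comp_mem hA (Function.extend k φ 0)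

theorem single_one_mem_of_apply_ne_zero {M : Matrix ι ι R} (hM : M ∈ A) {x y : ι}
    (hx : single x x 1 ∈ A) (hy : single y y 1 ∈ A) (hxy : M x y ≠ 0) : single x y 1 ∈ A := by
  have := A.smul_mem (mul_mem (mul_mem hx hM) hy) (M x y)⁻¹
  rwa [single_mul_mul_single, one_mul, mul_one, smul_single, smul_eq_mul,
    inv_mul_cancel₀ hxy] at this

theorem single_one_mem_of_reflTransGen {κ : Type*} (φ : κ → ι) {r : κ → κ → Prop}
    (hdiag : ∀ a, single (φ a) (φ a) 1 ∈ A) (hr : ∀ a b, r a b → single (φ a) (φ b) 1 ∈ A)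
    {a b : κ} (h : Relation.ReflTransGen r a b) : single (φ a) (φ b) 1 ∈ A := by
  induction h with
  | refl => exact hdiag a
  | tail _ hbc ih => simpa using mul_mem ih (hr _ _ hbc)

theorem eq_top_of_single_one_mem [StarRing R] (hA : ∀ M ∈ A, Mᴴ ∈ A) (x₀ : ι)
    (h : ∀ y, single x₀ y 1 ∈ A) : A = ⊤ := by
  have hall : ∀ x y, single x y (1 : R) ∈ A := fun x y => by
    simpa using mul_mem (hA _ (h x)) (h y)
  refine eq_top_iff.2 fun M _ => ?_
  rw [matrix_eq_sum_single M]
  exact sum_mem fun x _ => sum_mem fun y _ => by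
    simpa [smul_single] using A.smul_mem (hall x y) (M x y)

theorem single_one_mem_of_isUnit_submatrix {κ : Type*} [Fintype κ] [DecidableEq κ]
    {H : Matrix ι ι R} (hH : H ∈ A) {e f : κ → ι} (hf : f.Injective)
    (hB : IsUnit (H.submatrix e f))
    (hP : diagonal (fun y => if y ∈ Set.range f then (1 : R) else 0) ∈ A)
    {x : ι} (hx : ∀ r, single x (e r) 1 ∈ A) (c : κ) : single x (f c) 1 ∈ A := by
  set B := H.submatrix e f
  have hBB : B⁻¹ * B = 1 := nonsing_inv_mul B ((isUnit_iff_isUnit_det B).1 hB)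
  have hwitness : (∑ r, B⁻¹ c r • single x (e r) 1) * H *
      diagonal (fun y => if y ∈ Set.range f then (1 : R) else 0) = single x (f c) 1 := by
    -- on the columns `f`, row `x` of the left-hand side is row `c` of `B⁻¹ * B = 1`
    ext x' y
    rw [mul_diagonal, Matrix.sum_mul, sum_apply]
    simp only [smul_mul, smul_apply, smul_eq_mul]
    rcases eq_or_ne x x' with rfl | hx'
    · simp only [single_mul_apply_same, one_mul]
      rcases em (y ∈ Set.range f) with ⟨c', rfl⟩ | hy
      · have := congrFun (congrFun hBB c) c'
        rw [mul_apply] at this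
        simpa [hf.eq_iff, single_apply, one_apply, eq_comm, B] using this
      · simp [hy, show f c ≠ y from fun h => hy ⟨c, h⟩]
    · simp [single_mul_apply_of_ne (h := hx'.symm), hx']
  rw [← hwitness]
  exact mul_mem (mul_mem (sum_mem fun r _ => A.smul_mem (hx r) _) hH) hP

section Kronecker

variable {m κ : Type*} [DecidableEq m] [DecidableEq κ]

theorem single_one_kronecker_diagonal (i : m) (d : κ → R) :
    single i i (1 : R) ⊗ₖ diagonal d =
      diagonal fun x => (Pi.single i 1 : m → R) x.1 * d x.2 := by
  rw [← diagonal_single, diagonal_kronecker_diagonal]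

variable [Fintype m] [Fintype κ] {A : Subalgebra R (Matrix (m × κ) (m × κ) R)}

theorem single_one_mem_of_single_kronecker_diagonal_mem {i : m}
    (hP : single i i 1 ⊗ₖ (1 : Matrix κ κ R) ∈ A) {d : κ → R} (hd : d.Injective)
    (hD : single i i 1 ⊗ₖ diagonal d ∈ A) (a : κ) : single (i, a) (i, a) 1 ∈ A := by
  rw [single_one_kronecker_diagonal] at hD
  have := mul_mem hP (diagonal_comp_mem hD (Function.extend d (Pi.single a 1) 0))
  rw [← diagonal_one, single_one_kronecker_diagonal, diagonal_mul_diagonal] at this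
  rw [← diagonal_single]
  convert this using 1
  congr 1
  funext ⟨j, b⟩
  rcases eq_or_ne j i with rfl | hj
  · simp [hd.extend_apply, Pi.single_apply]
  · simp [Pi.single_apply, hj]

theorem single_one_mem_of_single_kronecker_mem {i : m}
    (hP : single i i 1 ⊗ₖ (1 : Matrix κ κ R) ∈ A) {d : κ → R} (hd : d.Injective)
    (hD : single i i 1 ⊗ₖ diagonal d ∈ A) {ν : Type*} {v : ν → Matrix κ κ R}
    (hv : ∀ t, single i i 1 ⊗ₖ v t ∈ A)
    (hconn : ∀ a b, Relation.ReflTransGen (fun a b => ∃ t, v t a b ≠ 0) a b) (a b : κ) :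
    single (i, a) (i, b) 1 ∈ A := by
  have hdiag := single_one_mem_of_single_kronecker_diagonal_mem hP hd hD
  refine single_one_mem_of_reflTransGen (fun a => (i, a)) hdiag (fun a b ⟨t, ht⟩ => ?_)
    (hconn a b)
  exact single_one_mem_of_apply_ne_zero (hv t) (hdiag a) (hdiag b) (by simpa using ht)

end Kronecker

end Matrix

open Matrix

section Blocks

variable {n q : ℕ}

theorem single_kronecker_blk (M : Matrix (Fin n × Fin q) (Fin n × Fin q) ℂ) (i j : Fin n) :
    single i j 1 ⊗ₖ blk M i j =
      (single i i 1 ⊗ₖ (1 : Matrix (Fin q) (Fin q) ℂ)) * M * (single j j 1 ⊗ₖ 1) := by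
  rw [← diagonal_one, single_one_kronecker_diagonal, single_one_kronecker_diagonal]
  ext ⟨i', a⟩ ⟨j', b⟩
  rw [mul_diagonal, diagonal_mul]
  rcases eq_or_ne i i' with rfl | hi <;> rcases eq_or_ne j j' with rfl | hj <;>
    simp [blk, *]

theorem IsWord.single_kronecker_mem {H K : Matrix (Fin n × Fin q) (Fin n × Fin q) ℂ}
    {A : Subalgebra ℂ (Matrix (Fin n × Fin q) (Fin n × Fin q) ℂ)} (hH : H ∈ A) (hK : K ∈ A)
    (hP : ∀ i, single i i 1 ⊗ₖ (1 : Matrix (Fin q) (Fin q) ℂ) ∈ A) {i j : Fin n}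
    {w : Matrix (Fin q) (Fin q) ℂ} (hw : IsWord H K i j w) : single i j 1 ⊗ₖ w ∈ A := by
  have hblk : ∀ M, M = H ∨ M = K → ∀ i j, single i j 1 ⊗ₖ blk M i j ∈ A := by
    rintro M hM i j
    rw [single_kronecker_blk]
    exact mul_mem (mul_mem (hP i) (by rcases hM with rfl | rfl <;> assumption)) (hP j)
  induction hw with
  | base M hM i j => exact hblk M hM i j
  | step M hM i j l w _ ih =>
    simpa [← mul_kronecker_mul] using mul_mem (hblk M hM i j) ih

theorem unflat_mul_add_s16 (hn : 0 < n) (hq : 0 < q) {s c : ℕ} (h : s + c / q < n) :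
    unflat hn hq (q * s + c) = (⟨s + c / q, h⟩, ⟨c % q, Nat.mod_lt _ hq⟩) := by
  simp [unflat, Nat.mul_add_div hq, Nat.mod_eq_of_lt h]

/-- `unflat` reads `t < q * d` as `(t / q, t % q)`, i.e. as `finProdFinEquiv.symm` up to
`q * d = d * q`. -/
theorem condL_block_eq_submatrix (hn : 0 < n) (hq : 0 < q) {s d : ℕ} (hsd : s + d ≤ n)
    (H : Matrix (Fin n × Fin q) (Fin n × Fin q) ℂ) :
    (of fun r c : Fin (q * d) => H (unflat hn hq r) (unflat hn hq (q * s + c))) =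
      (H.submatrix (fun p : Fin d × Fin q => (Fin.castLE (by omega) p.1, p.2))
        (fun p => (⟨s + p.1, by omega⟩, p.2))).submatrix
        ((finCongr (Nat.mul_comm q d)).trans finProdFinEquiv.symm)
        ((finCongr (Nat.mul_comm q d)).trans finProdFinEquiv.symm) := by
  ext r c
  have hdiv : ∀ t : Fin (q * d), (t : ℕ) / q < d := fun t => Nat.div_lt_of_lt_mul t.isLt
  have hr := unflat_mul_add_s16 hn hq (s := 0) (c := r) (by have := hdiv r; omega)
  have hc := unflat_mul_add_s16 hn hq (s := s) (c := c) (by have := hdiv c; omega)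
  simp only [Nat.mul_zero, Nat.zero_add] at hr
  simp [hr, hc, finProdFinEquiv, Fin.divNat, Fin.modNat]

theorem single_one_mem_of_isUnit_condL_block {hn : 0 < n} {hq : 0 < q}
    {A : Subalgebra ℂ (Matrix (Fin n × Fin q) (Fin n × Fin q) ℂ)}
    {H : Matrix (Fin n × Fin q) (Fin n × Fin q) ℂ} (hH : H ∈ A)
    (hP : ∀ φ : Fin n → ℂ, diagonal (fun y => φ y.1) ∈ A) {x₀ : Fin n × Fin q} {s d : ℕ}
    (hds : d ≤ s) (hsd : s + d ≤ n)
    (hB : IsUnit (of fun r c : Fin (q * d) => H (unflat hn hq r) (unflat hn hq (q * s + c))))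
    (hx₀ : ∀ y : Fin n × Fin q, (y.1 : ℕ) < s → single x₀ y 1 ∈ A)
    (y : Fin n × Fin q) (hy : (y.1 : ℕ) < s + d) : single x₀ y 1 ∈ A := by
  rcases lt_or_ge (y.1 : ℕ) s with hys | hsy
  · exact hx₀ y hys
  rw [condL_block_eq_submatrix hn hq hsd, isUnit_submatrix_equiv] at hB
  set f : Fin d × Fin q → Fin n × Fin q := fun p => (⟨s + p.1, by omega⟩, p.2)
  have hf : f.Injective := fun p p' h => by
    simp only [f, Prod.mk.injEq, Fin.mk.injEq, Nat.add_left_cancel_iff] at h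
    exact Prod.ext (Fin.ext h.1) h.2
  have hrange (z : Fin n × Fin q) : z ∈ Set.range f ↔ s ≤ z.1 ∧ (z.1 : ℕ) < s + d :=
    ⟨by rintro ⟨p, rfl⟩; simp [f],
      fun h => ⟨(⟨z.1 - s, by omega⟩, z.2), by ext <;> simp [f]; omega⟩⟩
  obtain ⟨p, hp⟩ := (hrange y).2 ⟨hsy, hy⟩
  rw [← hp]
  exact single_one_mem_of_isUnit_submatrix hH hf hB
    (by simpa [hrange] using hP fun i => if s ≤ i ∧ (i : ℕ) < s + d then 1 else 0)
    (fun p => hx₀ _ (by simp; omega)) p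

theorem le_sum_Iio_of_eq_sum_Iic {m : ℕ} {l : Fin m → ℕ}
    (h01 : ∀ j : Fin m, (j : ℕ) ≤ 1 → l j = 1)
    (hrec : ∀ j : Fin m, 2 ≤ (j : ℕ) → ∃ k : Fin m, k < j ∧ l j = ∑ i ∈ Finset.Iic k, l i)
    (j : Fin m) (hj : 1 ≤ (j : ℕ)) : l j ≤ ∑ i ∈ Finset.Iio j, l i := by
  rcases eq_or_lt_of_le hj with hj1 | hj2
  · have h0 : (⟨0, by omega⟩ : Fin m) ∈ Finset.Iio j := by simp [Fin.lt_def]; omega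
    rw [h01 j hj1.ge, ← h01 ⟨0, by omega⟩ (Nat.zero_le 1)]
    exact Finset.single_le_sum (fun _ _ => Nat.zero_le _) h0
  · obtain ⟨k, hkj, hk⟩ := hrec j hj2
    rw [hk]
    exact Finset.sum_le_sum_of_subset fun i hi =>
      Finset.mem_Iio.2 ((Finset.mem_Iic.1 hi).trans_lt hkj)

theorem single_one_mem_of_condL {hn : 0 < n} {hq : 0 < q}
    {A : Subalgebra ℂ (Matrix (Fin n × Fin q) (Fin n × Fin q) ℂ)}
    {H : Matrix (Fin n × Fin q) (Fin n × Fin q) ℂ} (hH : H ∈ A)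
    (hP : ∀ φ : Fin n → ℂ, diagonal (fun y => φ y.1) ∈ A) (hL : CondL hn hq H)
    {x₀ : Fin n × Fin q} (hx₀ : ∀ y : Fin n × Fin q, (y.1 : ℕ) = 0 → single x₀ y 1 ∈ A)
    (y : Fin n × Fin q) : single x₀ y 1 ∈ A := by
  obtain ⟨m, hm, l, h01, -, hsum, hrec, hinv⟩ := hL
  have hIic : ∀ j : Fin m, ∑ i ∈ Finset.Iic j, l i = ∑ i ∈ Finset.Iio j, l i + l j := fun j => by
    rw [← Finset.Iio_insert, Finset.sum_insert Finset.notMem_Iio_self, add_comm]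
  have hle : ∀ j : Fin m, ∑ i ∈ Finset.Iic j, l i ≤ n := fun j =>
    hsum ▸ Finset.sum_le_sum_of_subset (Finset.subset_univ _)
  have hprefix : ∀ t (ht : t < m) (y : Fin n × Fin q), (y.1 : ℕ) < ∑ i ∈ Finset.Iic ⟨t, ht⟩, l i →
      single x₀ y 1 ∈ A := by
    intro t
    induction t with
    | zero =>
      intro ht y hy
      have hIio : Finset.Iio (⟨0, ht⟩ : Fin m) = ∅ := by
        ext i; simp [Fin.lt_def]
      rw [hIic, hIio, h01 _ (Nat.zero_le 1)] at hy
      exact hx₀ y (by simp at hy; omega)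
    | succ t ih =>
      intro ht y hy
      have hIio : Finset.Iio (⟨t + 1, ht⟩ : Fin m) = Finset.Iic ⟨t, by omega⟩ := by
        ext; simp [Fin.lt_def, Fin.le_def]
      rw [hIic] at hy
      have := hle ⟨t + 1, ht⟩
      rw [hIic] at this
      exact single_one_mem_of_isUnit_condL_block hH hP
        (le_sum_Iio_of_eq_sum_Iic h01 hrec _ (by simp)) this (hinv _)
        (by rw [hIio]; exact ih _) y hy
  have hall : Finset.Iic (⟨m - 1, by omega⟩ : Fin m) = Finset.univ := by
    ext; simp [Fin.le_def]; omega
  exact hprefix (m - 1) (by omega) y (by rw [hall, hsum]; exact y.1.isLt)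

end Blocks

/-- **q-block constructibility.** Suppose `K` is diagonal with `n` distinct real
eigenvalues each of multiplicity `q`, `H` satisfies Condition L-q, there are
q-words `v₁, …, v_r` based at `0` and ending at `0` whose Burnside graph on
`Fin q` is strongly connected, and there is a q-word `w` based at `0` with
`w wᴴ` diagonal with `q` pairwise distinct diagonal entries. Then `H` and `K`
generate the full matrix algebra `M_{qn}(ℂ)`. -/
theorem q_block_constructibility
    (q n : ℕ) (hq : 0 < q) (hn : 0 < n)
    (H K : Matrix (Fin n × Fin q) (Fin n × Fin q) ℂ)
    (hH : Hᴴ = H)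
    (k : Fin n → ℝ) (hk : Function.Injective k)
    (hK : ∀ x y : Fin n × Fin q, K x y = if x = y then (k x.1 : ℂ) else 0)
    (hv : ∃ (r : ℕ) (_ : 1 ≤ r) (v : Fin r → Matrix (Fin q) (Fin q) ℂ),
      (∀ t, IsWord H K ⟨0, hn⟩ ⟨0, hn⟩ (v t)) ∧
      (∀ a b : Fin q,
        Relation.ReflTransGen (fun a b : Fin q => a ≠ b ∧ ∃ t, v t a b ≠ 0) a b))
    (hL : CondL hn hq H)
    (hw : ∃ (w : Matrix (Fin q) (Fin q) ℂ) (j : Fin n),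
      IsWord H K ⟨0, hn⟩ j w ∧
      ∃ dvals : Fin q → ℂ, Function.Injective dvals ∧ w * wᴴ = Matrix.diagonal dvals) :
    Algebra.adjoin ℂ {H, K} = ⊤ := by
  set A := Algebra.adjoin ℂ {H, K}
  have hHA : H ∈ A := Algebra.subset_adjoin (by simp)
  have hKA : K ∈ A := Algebra.subset_adjoin (by simp)
  have hKdiag : K = diagonal fun x => (k x.1 : ℂ) := by
    ext x y; rw [hK, diagonal_apply]
  have hKK : Kᴴ = K := by
    rw [hKdiag, diagonal_conjTranspose]; congr 1; funext x; simp
  have hstar : ∀ M ∈ A, Mᴴ ∈ A := fun M hM => Algebra.star_mem_adjoin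
    (by rintro x (rfl | rfl | -) <;> simp [star_eq_conjTranspose, hH, hKK]) hM
  have hP : ∀ φ : Fin n → ℂ, diagonal (fun y => φ y.1) ∈ A :=
    diagonal_comp_mem_of_injective (p := Prod.fst) (Complex.ofReal_injective.comp hk)
      (hKdiag ▸ hKA)
  have hblock (i : Fin n) : single i i 1 ⊗ₖ (1 : Matrix (Fin q) (Fin q) ℂ) ∈ A := by
    rw [← diagonal_one, single_one_kronecker_diagonal]; simpa using hP (Pi.single i 1)
  obtain ⟨_, -, v, hv, hconn⟩ := hv
  obtain ⟨w, j, hw, d, hd, hwd⟩ := hw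
  have hwA := hw.single_kronecker_mem hHA hKA hblock
  have hD : single ⟨0, hn⟩ ⟨0, hn⟩ 1 ⊗ₖ diagonal d ∈ A := by
    have := mul_mem hwA (hstar _ hwA)
    rwa [conjTranspose_kronecker, conjTranspose_single, star_one, ← mul_kronecker_mul,
      single_mul_single_same, one_mul, hwd] at this
  have hcorner := single_one_mem_of_single_kronecker_mem (hblock _) hd hD
    (fun t => (hv t).single_kronecker_mem hHA hKA hblock)
    (fun a b => Relation.ReflTransGen.mono (fun _ _ h => h.2) _ _ (hconn a b))
  refine eq_top_of_single_one_mem hstar (⟨0, hn⟩, ⟨0, hq⟩)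
    (single_one_mem_of_condL hHA hP hL fun ⟨i, b⟩ hi => ?_)
  obtain rfl : i = ⟨0, hn⟩ := Fin.ext hi
  exact hcorner _ _
end
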